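/- arXiv:1102.0820 — 2 statements merged into one kernel-verified Lean document; each statement's English description precedes it below -/
import Mathlib

section
/- Let f : A → B be a homomorphism of finitely generated abelian groups whose restriction to the torsion subgroup Tor(A) → Tor(B) is the zero map. Then the induced map Ext^1_ℤ(B, ℤ) → Ext^1_ℤ(A, ℤ) is the zero map. -/
/-!
A homomorphism killing the torsion of a finitely generated abelian group `A` factors through
`A ⧸ Tor(A)`, which is finitely generated and torsion-free, hence free and so projective.
Since `Ext¹(P, -)` vanishes for projective `P`, the induced map on `Ext¹(-, ℤ)` factors through
zero.
-/

open CategoryTheory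

theorem Ext_map_eq_zero_of_factors_through_projective {R : Type*} [Ring R] {C : Type*}
    [Category* C] [Abelian C] [Linear R C] [EnoughProjectives C] {X Y P : C} [Projective P]
    (g : X ⟶ P) (h : P ⟶ Y) (n : ℕ) (Z : C) :
    ((Ext R C (n + 1)).map (g ≫ h).op).app Z = 0 := by
  rw [op_comp, Functor.map_comp, NatTrans.comp_app,
    (isZero_Ext_succ_of_projective P Z n).eq_zero_of_src (((Ext R C (n + 1)).map g.op).app Z),
    Limits.comp_zero]

theorem AddMonoidHom.torsion_le_ker_toIntLinearMap {A B : Type*} [AddCommGroup A]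
    [AddCommGroup B]
    (f : A →+ B) (hf : ∀ a : A, IsOfFinAddOrder a → f a = 0) :
    Submodule.torsion ℤ A ≤ LinearMap.ker f.toIntLinearMap := fun a ha =>
  hf a <| by
    simpa [← Submodule.mem_toAddSubgroup, Submodule.torsion_int, AddCommGroup.mem_torsion]
      using ha

theorem Module.projective_quotient_torsion_int (A : Type*) [AddCommGroup A] [AddGroup.FG A] :
    Module.Projective ℤ (A ⧸ Submodule.torsion ℤ A) :=
  have : Module.Finite ℤ A := Module.Finite.iff_addGroup_fg.mpr ‹_›
  have : Module.Free ℤ (A ⧸ Submodule.torsion ℤ A) := Module.free_of_finite_type_torsion_free'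
  Module.Projective.of_free

theorem ext_map_zero_of_torsion_zero_general (A B : Type) [AddCommGroup A] [AddCommGroup B]
    [AddGroup.FG A] (f : A →+ B)
    (hf : ∀ a : A, IsOfFinAddOrder a → f a = 0) :
    ((Ext ℤ (ModuleCat ℤ) 1).map
        (ModuleCat.ofHom f.toIntLinearMap : ModuleCat.of ℤ A ⟶ ModuleCat.of ℤ B).op).app
      (ModuleCat.of ℤ ℤ) = 0 := by
  let T := Submodule.torsion ℤ A
  have : Projective (ModuleCat.of ℤ (A ⧸ T)) :=
    (IsProjective.iff_projective _).mp (Module.projective_quotient_torsion_int A)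
  have hfactor : ModuleCat.ofHom f.toIntLinearMap =
      ModuleCat.ofHom T.mkQ ≫
        ModuleCat.ofHom (T.liftQ _ (f.torsion_le_ker_toIntLinearMap hf)) := rfl
  rw [hfactor]
  exact Ext_map_eq_zero_of_factors_through_projective _ _ 0 _

/-- If `f : A → B` is a homomorphism of finitely generated abelian groups that vanishes on
the torsion subgroup of... rather, restricts to the zero map `Tor(A) → Tor(B)`, then the
induced map `Ext¹_ℤ(B, ℤ) → Ext¹_ℤ(A, ℤ)` is zero. -/
theorem ext_map_zero_of_torsion_zero (A B : Type) [AddCommGroup A] [AddCommGroup B]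
    [AddGroup.FG A] [AddGroup.FG B] (f : A →+ B)
    (hf : ∀ a : A, IsOfFinAddOrder a → f a = 0) :
    ((Ext ℤ (ModuleCat ℤ) 1).map
        (ModuleCat.ofHom f.toIntLinearMap : ModuleCat.of ℤ A ⟶ ModuleCat.of ℤ B).op).app
      (ModuleCat.of ℤ ℤ) = 0 :=
  ext_map_zero_of_torsion_zero_general A B f hf
end

section
/- Let G be a group whose abelianization A = G^{ab} is finitely generated, let Γ = Tor(A) be the torsion subgroup of A, let q : A → Γ be a homomorphism restricting to the identity on Γ, and let φ : G → Γ be the composite of the abelianization map with q. Set K = ker φ. Then the image of the torsion subgroup of K^{ab} under the natural map K^{ab} → A induced by the inclusion K ⊆ G is trivial. -/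
/-- Let `G` be a group with finitely generated abelianization `A`, `Γ = Tor(A)`,
`q : A → Γ` a retraction, `φ : G → Γ` the composite and `K = ker φ`. Then the natural map
`K^{ab} → A` kills the torsion subgroup of `K^{ab}`. -/
theorem torsion_maps_trivially (G : Type*) [Group G] [Group.FG (Abelianization G)]
    (q : Abelianization G →* CommGroup.torsion (Abelianization G))
    (hq : ∀ t : CommGroup.torsion (Abelianization G), q (t : Abelianization G) = t) :
    ∀ x : Abelianization ((q.comp Abelianization.of).ker),
      IsOfFinOrder x →
        Abelianization.map ((q.comp Abelianization.of).ker.subtype) x = 1 := by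
  intro x hx
  have hy : IsOfFinOrder (Abelianization.map ((q.comp Abelianization.of).ker.subtype) x) :=
    (Abelianization.map ((q.comp Abelianization.of).ker.subtype)).isOfFinOrder hx
  have hmem : Abelianization.map ((q.comp Abelianization.of).ker.subtype) x
      ∈ CommGroup.torsion (Abelianization G) := hy
  have hq1 : q (Abelianization.map ((q.comp Abelianization.of).ker.subtype) x) = 1 := by
    obtain ⟨k, rfl⟩ : ∃ k, Abelianization.of k = x :=
      QuotientGroup.mk'_surjective (commutator _) x
    have h1 : Abelianization.map ((q.comp Abelianization.of).ker.subtype)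
        (Abelianization.of k) = Abelianization.of (k : G) := by
      simp
    rw [h1]
    exact k.2
  have h2 := hq ⟨_, hmem⟩
  rw [hq1] at h2
  have h3 := congrArg (Subtype.val) h2
  simpa using h3.symm
end
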